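/- arXiv:1511.08826 — 3 statements merged into one kernel-verified Lean document; each statement's English description precedes it below -/
import Mathlib

section
/- Let τ ≥ 3 be an odd integer and let H be a finite bipartite simple graph with parts A and B, each of size n, such that: H is regular of degree Δ; H has girth at least 6; for every a ∈ A and every b ∈ B there is a walk in H of length at most τ from a to b; and H is self-dual, meaning there is a bijection σ : A → B such that the map sending each a ∈ A to σ(a) and each b ∈ B to σ^{−1}(b) is an automorphism of H. Then there exists a finite simple graph Ψ on exactly τ·n vertices that is regular of degree 2Δ, has girth at least min{τ, 4}, and in which any two distinct vertices are joined by a walk of length at most τ (so χ(Ψ^τ) ≥ τ·n). -/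
/-- The `t`-th power of a simple graph `G`: two distinct vertices are adjacent
iff they are joined in `G` by a walk of length at most `t`. -/
def SimpleGraph.power {V : Type*} (G : SimpleGraph V) (t : ℕ) : SimpleGraph V where
  Adj u v := u ≠ v ∧ ∃ w : G.Walk u v, w.length ≤ t
  symm := by
    constructor
    rintro u v ⟨huv, w, hw⟩
    exact ⟨huv.symm, w.reverse, by simpa using hw⟩
  loopless := by constructor; rintro u ⟨h, -⟩; exact h rfl

/-!
Place `τ` copies of `A` around the cycle `C_τ = ZMod τ` and join `(i, a)` to `(i ± 1, b)`
whenever `σ a ∼ b` in `H`. Since `σ a ∈ B` has all its `Δ` neighbours in `A`, every vertex gets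
degree `2Δ`; a triangle would project to a closed walk of length `3` in `C_τ`, impossible for
`τ ≥ 4`. As `τ` is odd, any two vertices of `C_τ` are joined by a walk of length exactly `τ`. An
`H`-walk `a → σ b` has odd length at most `τ`, so it can be padded to length `τ`; folding it onto
`A` by `σ` and running it alongside the cycle walk joins `(i, a)` to `(j, b)` by a walk of length
`τ`. Hence `Ψ^τ` is complete.
-/

lemma Set.MapsTo.of_involutive_of_ncard_le {α : Type*} {f : α → α} (hf : Function.Involutive f)
    {s t : Set α} (hst : Set.MapsTo f s t) (hcard : t.ncard ≤ s.ncard) (ht : t.Finite) :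
    Set.MapsTo f t s := by
  have himage : f '' s = t :=
    Set.eq_of_subset_of_ncard_le hst.image_subset
      (by rwa [Set.ncard_image_of_injective _ hf.injective]) ht
  intro b hb
  rw [← himage] at hb
  obtain ⟨a, ha, rfl⟩ := hb
  rwa [hf a]

namespace SimpleGraph

variable {ι α V W : Type*}

lemma IsBipartiteWith.odd_length {G : SimpleGraph V} {s t : Set V} (h : G.IsBipartiteWith s t)
    {u v : V} (hu : u ∈ s) (hv : v ∈ t) (p : G.Walk u v) : Odd p.length := by
  classical
  let c : G.Coloring Bool := Coloring.mk (fun w => decide (w ∈ s)) fun {x y} hxy => by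
    rcases h.mem_of_adj hxy with ⟨hx, hy⟩ | ⟨hx, hy⟩
    · simp [hx, Set.disjoint_right.mp h.disjoint hy]
    · simp [hy, Set.disjoint_right.mp h.disjoint hx]
  rw [c.odd_length_iff_not_congr]
  change ¬decide (u ∈ s) = true ↔ decide (v ∈ s) = true
  simp [hu, Set.disjoint_right.mp h.disjoint hv]

lemma Walk.exists_length_eq_add_two_mul {G : SimpleGraph V} {u v w : V} (huw : G.Adj u w)
    (p : G.Walk u v) (k : ℕ) : ∃ q : G.Walk u v, q.length = p.length + 2 * k := by
  induction k with
  | zero => exact ⟨p, rfl⟩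
  | succ k ih =>
    obtain ⟨q, hq⟩ := ih
    refine ⟨Walk.cons huw (Walk.cons huw.symm q), ?_⟩
    rw [Walk.length_cons, Walk.length_cons, hq]
    ring

lemma power_eq_top_of_exists_walk {G : SimpleGraph V} {t : ℕ}
    (h : ∀ u v, u ≠ v → ∃ p : G.Walk u v, p.length ≤ t) : G.power t = ⊤ := by
  ext u v
  exact ⟨And.left, fun huv => ⟨huv, h u v huv⟩⟩

lemma four_le_egirth_of_hom {G : SimpleGraph V} {G' : SimpleGraph W} (f : G →g G')
    (h : ∀ v (p : G'.Walk v v), p.length ≠ 3) : 4 ≤ G.egirth := by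
  rw [le_egirth]
  intro v c hc
  have h3 := hc.three_le_length
  have hne := h _ (c.map f)
  rw [Walk.length_map] at hne
  exact_mod_cast (by omega : 4 ≤ c.length)

section CycleOnZMod

variable {τ : ℕ}

lemma circulantGraph_one_adj_add_one (hτ : 1 < τ) (i : ZMod τ) :
    (circulantGraph ({1} : Set (ZMod τ))).Adj i (i + 1) := by
  have : Fact (1 < τ) := ⟨hτ⟩
  simp [circulantGraph_adj]

lemma exists_walk_circulantGraph_one_add (hτ : 1 < τ) (i : ZMod τ) (k : ℕ) :
    ∃ p : (circulantGraph ({1} : Set (ZMod τ))).Walk i (i + k), p.length = k := by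
  induction k generalizing i with
  | zero => exact ⟨Walk.nil.copy rfl (by simp), by simp⟩
  | succ k ih =>
    obtain ⟨p, hp⟩ := ih (i + 1)
    refine ⟨(Walk.cons (circulantGraph_one_adj_add_one hτ i) p).copy rfl ?_, ?_⟩
    · push_cast; ring
    · simp [hp]

lemma exists_walk_circulantGraph_one_add_sub (hτ : 1 < τ) (i : ZMod τ) (k m : ℕ) :
    ∃ p : (circulantGraph ({1} : Set (ZMod τ))).Walk i (i + k - m), p.length = k + m := by
  obtain ⟨p, hp⟩ := exists_walk_circulantGraph_one_add hτ i k
  obtain ⟨q, hq⟩ := exists_walk_circulantGraph_one_add hτ (i + k - m) m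
  exact ⟨p.append (q.copy rfl (sub_add_cancel _ _)).reverse, by simp [hp, hq]⟩

lemma exists_add_sub_of_walk_circulantGraph_one {i j : ZMod τ}
    (p : (circulantGraph ({1} : Set (ZMod τ))).Walk i j) :
    ∃ k m : ℕ, k + m = p.length ∧ j = i + k - m := by
  induction p with
  | nil => exact ⟨0, 0, rfl, by simp⟩
  | cons h p ih =>
    obtain ⟨k, m, hkm, hj⟩ := ih
    rcases ((circulantGraph_adj _ _ _).mp h).2 with hback | hfwd
    · refine ⟨k, m + 1, by rw [Walk.length_cons, ← hkm]; ring, ?_⟩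
      rw [hj]; push_cast
      linear_combination -(Set.mem_singleton_iff.mp hback)
    · refine ⟨k + 1, m, by rw [Walk.length_cons, ← hkm]; ring, ?_⟩
      rw [hj]; push_cast
      linear_combination (Set.mem_singleton_iff.mp hfwd)

lemma even_length_of_lt_of_walk_circulantGraph_one {i : ZMod τ}
    (p : (circulantGraph ({1} : Set (ZMod τ))).Walk i i) (h : p.length < τ) :
    Even p.length := by
  obtain ⟨k, m, hkm, hi⟩ := exists_add_sub_of_walk_circulantGraph_one p
  have hcast : (k : ZMod τ) = m := by linear_combination -hi
  have hmod := (ZMod.natCast_eq_natCast_iff' k m τ).mp hcast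
  rw [Nat.mod_eq_of_lt (by omega), Nat.mod_eq_of_lt (by omega)] at hmod
  exact ⟨k, by omega⟩

/-- With `d = j - i`, an odd number `τ = k + m` of steps with `k - m ≡ d` is found by taking
`k - m = d` when `d` is odd and `k - m = d - τ` when `d` is even. -/
lemma exists_walk_circulantGraph_one_length_eq (hτ : 1 < τ) (hodd : Odd τ) (i j : ZMod τ) :
    ∃ p : (circulantGraph ({1} : Set (ZMod τ))).Walk i j, p.length = τ := by
  have : NeZero τ := ⟨by omega⟩
  set d := (j - i).val
  have hd : (d : ZMod τ) = j - i := ZMod.natCast_zmod_val _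
  have hdτ : d < τ := ZMod.val_lt _
  have hτodd := Nat.odd_iff.mp hodd
  rcases Nat.even_or_odd d with ⟨k, hk⟩ | hdodd
  · obtain ⟨p, hp⟩ := exists_walk_circulantGraph_one_add_sub hτ i k (τ - k)
    refine ⟨p.copy rfl ?_, by rw [Walk.length_copy, hp]; omega⟩
    have hsum : ((τ - k : ℕ) : ZMod τ) + k = τ := by
      rw [← Nat.cast_add, Nat.sub_add_cancel (by omega)]
    rw [ZMod.natCast_self] at hsum
    have h2 : (k : ZMod τ) + k = d := by rw [hk]; push_cast; ring
    linear_combination -hsum + h2 + hd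
  · have hdodd := Nat.odd_iff.mp hdodd
    obtain ⟨p, hp⟩ := exists_walk_circulantGraph_one_add_sub hτ i ((τ + d) / 2) ((τ - d) / 2)
    refine ⟨p.copy rfl ?_, by rw [Walk.length_copy, hp]; omega⟩
    have hk : (τ + d) / 2 = (τ - d) / 2 + d := by omega
    rw [hk]; push_cast
    linear_combination hd

lemma ncard_neighborSet_circulantGraph_one (hτ : 2 < τ) (i : ZMod τ) :
    ((circulantGraph ({1} : Set (ZMod τ))).neighborSet i).ncard = 2 := by
  have : Fact (1 < τ) := ⟨by omega⟩
  have hnbr : (circulantGraph ({1} : Set (ZMod τ))).neighborSet i = {i + 1, i - 1} := by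
    ext j
    simp only [mem_neighborSet, circulantGraph_adj, Set.mem_singleton_iff, Set.mem_insert_iff]
    constructor
    · rintro ⟨-, h | h⟩
      · right; linear_combination -h
      · left; linear_combination h
    · rintro (rfl | rfl)
      · exact ⟨fun h => one_ne_zero (by linear_combination -h), Or.inr (by ring)⟩
      · exact ⟨fun h => one_ne_zero (by linear_combination h), Or.inl (by ring)⟩
  have htwo : (2 : ZMod τ) ≠ 0 := by
    intro h
    have := Nat.le_of_dvd two_pos ((ZMod.natCast_eq_zero_iff 2 τ).mp (by exact_mod_cast h))
    omega
  rw [hnbr, Set.ncard_pair]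
  intro h
  exact htwo (by linear_combination h)

end CycleOnZMod

/-- The categorical product of `G` with the graph, loops allowed, whose adjacency relation is
`R`. -/
def tensorRel (G : SimpleGraph ι) (R : α → α → Prop) (hR : Std.Symm R) :
    SimpleGraph (ι × α) where
  Adj x y := G.Adj x.1 y.1 ∧ R x.2 y.2
  symm := ⟨fun _ _ h => ⟨h.1.symm, hR.symm _ _ h.2⟩⟩
  loopless := ⟨fun x h => G.loopless.irrefl x.1 h.1⟩

section TensorRel

variable {G : SimpleGraph ι} {R : α → α → Prop} {hR : Std.Symm R}

lemma neighborSet_tensorRel (x : ι × α) :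
    (G.tensorRel R hR).neighborSet x = G.neighborSet x.1 ×ˢ {b | R x.2 b} := rfl

def tensorRelFst : G.tensorRel R hR →g G := ⟨Prod.fst, And.left⟩

lemma exists_walk_tensorRel {H : SimpleGraph W} (f : W → α)
    (hf : ∀ ⦃x y⦄, H.Adj x y → R (f x) (f y)) {i j : ι} (p : G.Walk i j) {x y : W}
    (q : H.Walk x y) (h : p.length = q.length) :
    ∃ r : (G.tensorRel R hR).Walk (i, f x) (j, f y), r.length = q.length := by
  induction q generalizing i with
  | nil =>
    cases p with
    | nil => exact ⟨Walk.nil, rfl⟩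
    | cons _ _ => simp at h
  | cons hxy q ih =>
    cases p with
    | nil => simp at h
    | cons hij p =>
      obtain ⟨r, hr⟩ := ih p (by simpa using h)
      have hadj : (G.tensorRel R hR).Adj (i, f _) (_, f _) := ⟨hij, hf hxy⟩
      exact ⟨Walk.cons hadj r, by rw [Walk.length_cons, Walk.length_cons, hr]⟩

lemma four_le_egirth_circulantGraph_one_tensorRel {τ : ℕ} (hτ : 3 < τ) :
    4 ≤ ((circulantGraph ({1} : Set (ZMod τ))).tensorRel R hR).egirth :=
  four_le_egirth_of_hom tensorRelFst fun _ p h3 => by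
    have heven := even_length_of_lt_of_walk_circulantGraph_one p (by omega)
    rw [h3] at heven
    exact absurd heven (by decide)

end TensorRel

variable {H : SimpleGraph W} {A B : Set W}

section Fold

variable (f : W → W) (hf : ∀ w ∉ A, f w ∈ A)

open Classical in
noncomputable def foldOnto (w : W) : A :=
  if h : w ∈ A then ⟨w, h⟩ else ⟨f w, hf w h⟩

lemma foldOnto_coe (a : A) : foldOnto f hf a = a := by
  simp [foldOnto]

lemma coe_foldOnto_of_not_mem {w : W} (h : w ∉ A) : (foldOnto f hf w : W) = f w := by
  simp [foldOnto, h]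

end Fold

variable (σ : H ≃g H)

lemma adj_foldOnto (hσ : Function.Involutive σ) (hbip : H.IsBipartiteWith A B)
    (hBA : ∀ w ∉ A, σ w ∈ A) ⦃x y : W⦄ (h : H.Adj x y) :
    H.Adj (σ (foldOnto σ hBA x)) (foldOnto σ hBA y) := by
  by_cases hx : x ∈ A
  · have hy : y ∉ A := Set.disjoint_right.mp hbip.disjoint (hbip.mem_of_mem_adj hx h)
    rw [foldOnto_coe σ hBA ⟨x, hx⟩, coe_foldOnto_of_not_mem σ hBA hy]
    exact σ.map_adj_iff.mpr h
  · have hy : y ∈ A :=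
      hbip.symm.mem_of_mem_adj ((hbip.mem_of_adj h).resolve_left (by tauto)).1 h
    rw [coe_foldOnto_of_not_mem σ hBA hx, hσ x, foldOnto_coe σ hBA ⟨y, hy⟩]
    exact h

lemma symm_adj_iso_left (hσ : Function.Involutive σ) : Std.Symm fun a b : A => H.Adj (σ a) b :=
  ⟨fun a b h => by rw [← σ.map_adj_iff, hσ] at h; exact h.symm⟩

/-- The conduit cycle: `τ` copies of `A` placed around a cycle, where `(i, a)` and `(i ± 1, b)`
are adjacent iff `σ a ∼ b` in `H`. -/
def conduitCycle (hσ : Function.Involutive σ) (A : Set W) (τ : ℕ) :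
    SimpleGraph (ZMod τ × A) :=
  (circulantGraph {1}).tensorRel (fun a b : A => H.Adj (σ a) b) (symm_adj_iso_left σ hσ)

lemma ncard_neighborSet_conduitCycle (hσ : Function.Involutive σ) {τ Δ : ℕ} (hτ : 2 < τ)
    (hbip : H.IsBipartiteWith A B) (hAB : Set.MapsTo σ A B)
    (hreg : ∀ v, (H.neighborSet v).ncard = Δ) (x : ZMod τ × A) :
    ((conduitCycle σ hσ A τ).neighborSet x).ncard = 2 * Δ := by
  have hnbr : {b : A | H.Adj (σ x.2) b} = Subtype.val ⁻¹' H.neighborSet (σ x.2) := rfl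
  rw [conduitCycle, neighborSet_tensorRel, Set.ncard_prod,
    ncard_neighborSet_circulantGraph_one hτ, hnbr,
    Set.ncard_preimage_of_injective_subset_range Subtype.val_injective
      (by simpa using isBipartiteWith_neighborSet_subset' hbip (hAB x.2.2)), hreg]

lemma exists_walk_conduitCycle_length_eq (hσ : Function.Involutive σ) {τ : ℕ} (hτ : 1 < τ)
    (hodd : Odd τ) (hbip : H.IsBipartiteWith A B) (hAB : Set.MapsTo σ A B)
    (hBA : ∀ w ∉ A, σ w ∈ A) (hwalk : ∀ a ∈ A, ∀ b ∈ B, ∃ p : H.Walk a b, p.length ≤ τ)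
    (x y : ZMod τ × A) : ∃ r : (conduitCycle σ hσ A τ).Walk x y, r.length = τ := by
  obtain ⟨i, a⟩ := x
  obtain ⟨j, b⟩ := y
  have hτodd := Nat.odd_iff.mp hodd
  obtain ⟨p, hp⟩ := exists_walk_circulantGraph_one_length_eq hτ hodd i j
  have hb : σ b ∈ B := hAB b.2
  obtain ⟨q₀, hq₀⟩ := hwalk a a.2 (σ b) hb
  have hq₀odd := Nat.odd_iff.mp (hbip.odd_length a.2 hb q₀)
  have hne : (a : W) ≠ σ b := Set.disjoint_left.mp hbip.disjoint a.2 ∘ (· ▸ hb)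
  obtain ⟨q, hq⟩ := q₀.exists_length_eq_add_two_mul (q₀.adj_snd (Walk.not_nil_of_ne hne))
    ((τ - q₀.length) / 2)
  obtain ⟨r, hr⟩ : ∃ r : (conduitCycle σ hσ A τ).Walk (i, foldOnto σ hBA a)
      (j, foldOnto σ hBA (σ b)), r.length = q.length :=
    exists_walk_tensorRel (foldOnto σ hBA) (adj_foldOnto σ hσ hbip hBA) p q (by omega)
  have hfb : foldOnto σ hBA (σ b) = b := by
    ext
    rw [coe_foldOnto_of_not_mem σ hBA (Set.disjoint_right.mp hbip.disjoint hb), hσ]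
  refine ⟨r.copy (by rw [foldOnto_coe]) (by rw [hfb]), ?_⟩
  rw [Walk.length_copy, hr, hq]
  omega

end SimpleGraph

theorem conduit_cycle_construction_general
    (τ : ℕ) (hτ : 3 ≤ τ) (hτodd : Odd τ)
    (W : Type) [Fintype W] (H : SimpleGraph W) (A B : Set W) (n Δ : ℕ)
    (hcover : ∀ w : W, w ∈ A ∨ w ∈ B) (hdisj : Disjoint A B)
    (hbip : ∀ u v : W, H.Adj u v → (u ∈ A ∧ v ∈ B) ∨ (u ∈ B ∧ v ∈ A))
    (hA : A.ncard = n) (hB : B.ncard = n)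
    (hreg : ∀ v : W, {w : W | H.Adj v w}.ncard = Δ)
    (hwalk : ∀ a ∈ A, ∀ b ∈ B, ∃ w : H.Walk a b, w.length ≤ τ)
    (hselfdual : ∃ σ : W ≃ W, (∀ u v : W, H.Adj (σ u) (σ v) ↔ H.Adj u v) ∧
      (∀ a ∈ A, σ a ∈ B) ∧ (∀ w : W, σ (σ w) = w)) :
    ∃ (V : Type) (_ : Fintype V) (Ψ : SimpleGraph V),
      Fintype.card V = τ * n ∧
      (∀ v : V, {w : V | Ψ.Adj v w}.ncard = 2 * Δ) ∧
      ((min τ 4 : ℕ) : ℕ∞) ≤ Ψ.egirth ∧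
      (∀ u v : V, u ≠ v → ∃ w : Ψ.Walk u v, w.length ≤ τ) ∧
      ((τ * n : ℕ) : ℕ∞) ≤ (Ψ.power τ).chromaticNumber := by
  classical
  have : NeZero τ := ⟨by omega⟩
  obtain ⟨σ₀, hσadj, hAB, hσσ⟩ := hselfdual
  let σ : H ≃g H := ⟨σ₀, hσadj _ _⟩
  have hσ : Function.Involutive σ := hσσ
  have hbip' : H.IsBipartiteWith A B := ⟨hdisj, hbip⟩
  have hBA : Set.MapsTo σ B A :=
    Set.MapsTo.of_involutive_of_ncard_le hσ hAB (by rw [hA, hB]) (Set.toFinite B)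
  let Ψ := SimpleGraph.conduitCycle σ hσ A τ
  have hwalks : ∀ u v, u ≠ v → ∃ p : Ψ.Walk u v, p.length ≤ τ := fun u v _ =>
    (SimpleGraph.exists_walk_conduitCycle_length_eq σ hσ (by omega) hτodd hbip' hAB
      (fun w hw => hBA ((hcover w).resolve_left hw)) hwalk u v).imp fun _ h => h.le
  have hcard : Fintype.card (ZMod τ × A) = τ * n := by
    rw [Fintype.card_prod, ZMod.card, ← Nat.card_eq_fintype_card, Nat.card_coe_set_eq, hA]
  refine ⟨ZMod τ × A, inferInstance, Ψ, hcard,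
    SimpleGraph.ncard_neighborSet_conduitCycle σ hσ (by omega) hbip' hAB hreg, ?_, hwalks, ?_⟩
  · rcases hτ.eq_or_lt with rfl | h3
    · exact_mod_cast Ψ.three_le_egirth
    · rw [min_eq_right (by omega)]
      exact_mod_cast SimpleGraph.four_le_egirth_circulantGraph_one_tensorRel h3
  · rw [SimpleGraph.power_eq_top_of_exists_walk hwalks, SimpleGraph.chromaticNumber_top,
      hcard]

/-- An `H`-cycle of length `τ` from a self-dual good conduit: if `τ ≥ 3` is odd and `H` is a
bipartite graph with parts `A`, `B` of size `n`, regular of degree `Δ`, of girth at least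
`6`, with a walk of length at most `τ` between any `a ∈ A` and `b ∈ B`, and self-dual
(there is an involutive automorphism of `H` swapping `A` and `B`), then there is a graph `Ψ`
on `τ·n` vertices, regular of degree `2Δ`, of girth at least `min {τ, 4}`, in which any two
distinct vertices are joined by a walk of length at most `τ`, whence `χ(Ψ^τ) ≥ τ·n`. -/
theorem conduit_cycle_construction
    (τ : ℕ) (hτ : 3 ≤ τ) (hτodd : Odd τ)
    (W : Type) [Fintype W] (H : SimpleGraph W) (A B : Set W) (n Δ : ℕ)
    (hcover : ∀ w : W, w ∈ A ∨ w ∈ B) (hdisj : Disjoint A B)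
    (hbip : ∀ u v : W, H.Adj u v → (u ∈ A ∧ v ∈ B) ∨ (u ∈ B ∧ v ∈ A))
    (hA : A.ncard = n) (hB : B.ncard = n)
    (hreg : ∀ v : W, {w : W | H.Adj v w}.ncard = Δ)
    (hgirth : 6 ≤ H.egirth)
    (hwalk : ∀ a ∈ A, ∀ b ∈ B, ∃ w : H.Walk a b, w.length ≤ τ)
    (hselfdual : ∃ σ : W ≃ W, (∀ u v : W, H.Adj (σ u) (σ v) ↔ H.Adj u v) ∧
      (∀ a ∈ A, σ a ∈ B) ∧ (∀ w : W, σ (σ w) = w)) :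
    ∃ (V : Type) (_ : Fintype V) (Ψ : SimpleGraph V),
      Fintype.card V = τ * n ∧
      (∀ v : V, {w : V | Ψ.Adj v w}.ncard = 2 * Δ) ∧
      ((min τ 4 : ℕ) : ℕ∞) ≤ Ψ.egirth ∧
      (∀ u v : V, u ≠ v → ∃ w : Ψ.Walk u v, w.length ≤ τ) ∧
      ((τ * n : ℕ) : ℕ∞) ≤ (Ψ.power τ).chromaticNumber :=
  conduit_cycle_construction_general τ hτ hτodd W H A B n Δ hcover hdisj hbip hA hB hreg hwalk
    hselfdual
end

section
/- For every real ε with 0 < ε < 1 and every integer N there exist an integer d ≥ N and a finite simple graph G of maximum degree at most d with χ(G³) ≥ (1 − ε)·3·d³/8. -/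
open SimpleGraph

lemma SimpleGraph.power_eq_top {V : Type*} {G : SimpleGraph V} {t : ℕ}
    (h : ∀ u v, ∃ p : G.Walk u v, p.length ≤ t) : G.power t = ⊤ := by
  ext u v
  exact ⟨fun huv => huv.1, fun huv => ⟨huv, h u v⟩⟩

lemma Set.ncard_range_le {α β : Type*} [Finite α] (f : α → β) :
    (Set.range f).ncard ≤ Nat.card α := by
  rw [← Set.image_univ]
  exact (Set.ncard_image_le Set.finite_univ).trans (Set.ncard_univ α).le

lemma ZMod.eq_or_eq_add_one_or_eq_add_one (i j : ZMod 3) : j = i ∨ j = i + 1 ∨ i = j + 1 := by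
  revert i j; decide

lemma ZMod.sum_three {M : Type*} [AddCommMonoid M] (i : ZMod 3) (f : ZMod 3 → M) :
    ∑ k, f k = f i + f (i + 1) + f (i + 2) := by
  have huniv : (Finset.univ : Finset (ZMod 3)) = {i, i + 1, i + 2} := by revert i; decide
  have hi : i ∉ ({i + 1, i + 2} : Finset (ZMod 3)) := by revert i; decide
  have hi1 : i + 1 ∉ ({i + 2} : Finset (ZMod 3)) := by revert i; decide
  rw [huniv, Finset.sum_insert hi, Finset.sum_insert hi1, Finset.sum_singleton, add_assoc]

lemma ZMod.funext_three {β : Type*} {f g : ZMod 3 → β} (i : ZMod 3) (h₀ : f i = g i)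
    (h₁ : f (i + 1) = g (i + 1)) (h₂ : f (i + 2) = g (i + 2)) : f = g := by
  funext k
  have hk : ∀ i k : ZMod 3, k = i ∨ k = i + 1 ∨ k = i + 2 := by decide
  obtain rfl | rfl | rfl := hk i k
  exacts [h₀, h₁, h₂]

section Parabola

variable {F : Type*} [Field F]

lemma exists_eq_add_sum_sq {ι : Type*} [Fintype ι] (hι : (Fintype.card ι : F) = 0) (w : ι → F)
    (hw : 1 + 2 * ∑ k, w k ≠ 0) : ∃ s : ι → F, w = s + fun _ => ∑ k, s k ^ 2 := by
  set K := (∑ k, w k ^ 2) / (1 + 2 * ∑ k, w k)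
  have hK : K * (1 + 2 * ∑ k, w k) = ∑ k, w k ^ 2 := div_mul_cancel₀ _ hw
  refine ⟨w - fun _ => K, ?_⟩
  -- `K = ∑ₖ (wₖ - K)²` is linear in `K` because the `card ι • K²` term vanishes
  have hsum : ∑ k, (w k - K) ^ 2 = K := by
    simp only [sub_sq, Finset.sum_add_distrib, Finset.sum_sub_distrib, ← Finset.sum_mul,
      ← Finset.mul_sum, Finset.sum_const, Finset.card_univ, nsmul_eq_mul, hι]
    linear_combination -hK
  ext k
  simp [hsum]

def parabola (i : ZMod 3) (t : F) : ZMod 3 → F := Pi.single i t + fun _ => t ^ 2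

@[simp] lemma parabola_apply (i k : ZMod 3) (t : F) :
    parabola i t k = (if k = i then t else 0) + t ^ 2 := by
  simp [parabola, Pi.single_apply]

lemma parabola_add_parabola_add_parabola (i : ZMod 3) (s : ZMod 3 → F) :
    parabola i (s i) + parabola (i + 1) (s (i + 1)) + parabola (i + 2) (s (i + 2)) =
      s + fun _ => ∑ k, s k ^ 2 := by
  refine ZMod.funext_three i ?_ ?_ ?_ <;> simp +decide [ZMod.sum_three i] <;> ring

lemma exists_parabola_add_sub_or_sub_add (h2 : (2 : F) ≠ 0) (i : ZMod 3) (w : ZMod 3 → F) :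
    (∃ a b c, w = parabola i a + parabola (i + 1) b - parabola (i + 1) c) ∨
      ∃ a b c, w = parabola i a - parabola i b + parabola i c := by
  set A := w i - w (i + 2)
  set C := w (i + 2)
  by_cases hD : w (i + 1) = C
  · right
    -- for `b = a + c - A` the common coordinate `a² - b² + c²` equals `A² - 2 (a - A) (c - A)`
    refine ⟨A + 1, A + 1 + (A ^ 2 - C) / 2, A + (A ^ 2 - C) / 2, ?_⟩
    refine ZMod.funext_three i ?_ ?_ ?_ <;> simp +decide [hD] <;> field_simp <;> ring
  · left
    set D := w (i + 1) - C
    have hD0 : D ≠ 0 := sub_ne_zero.mpr hD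
    -- `b - c = D` and `b² - c² = C - A²`
    refine ⟨A, ((C - A ^ 2) / D + D) / 2, ((C - A ^ 2) / D - D) / 2, ?_⟩
    refine ZMod.funext_three i ?_ ?_ ?_ <;> simp +decide <;> field_simp <;> ring

variable (F) in
def parabolaGraph : SimpleGraph (ZMod 3 × (ZMod 3 → F)) :=
  .fromRel fun u v => v.1 = u.1 + 1 ∧ ∃ t, v.2 = u.2 + parabola u.1 t

lemma parabolaGraph_adj {i j : ZMod 3} {x y : ZMod 3 → F} (t : F) (hj : j = i + 1)
    (hy : y = x + parabola i t) : (parabolaGraph F).Adj (i, x) (j, y) :=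
  (fromRel_adj _ _ _).mpr ⟨fun h => by simp [Prod.ext_iff, hj] at h, .inl ⟨hj, t, hy⟩⟩

lemma ncard_parabolaGraph_adj_le [Finite F] (v : ZMod 3 × (ZMod 3 → F)) :
    {w | (parabolaGraph F).Adj v w}.ncard ≤ 2 * Nat.card F := by
  obtain ⟨i, x⟩ := v
  let nbr : F ⊕ F → ZMod 3 × (ZMod 3 → F) :=
    Sum.elim (fun t => (i + 1, x + parabola i t)) (fun t => (i - 1, x - parabola (i - 1) t))
  have hsub : {w | (parabolaGraph F).Adj (i, x) w} ⊆ Set.range nbr := by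
    rintro ⟨j, y⟩ ⟨-, ⟨hj : j = i + 1, t, hy : y = x + parabola i t⟩ |
      ⟨rfl : i = j + 1, t, rfl : x = y + parabola j t⟩⟩
    · exact ⟨.inl t, by simp [nbr, hj, hy]⟩
    · exact ⟨.inr t, by simp [nbr]⟩
  calc {w | (parabolaGraph F).Adj (i, x) w}.ncard ≤ (Set.range nbr).ncard :=
        Set.ncard_le_ncard hsub (Set.finite_range nbr)
    _ ≤ Nat.card (F ⊕ F) := Set.ncard_range_le nbr
    _ = 2 * Nat.card F := by rw [Nat.card_sum]; ring

lemma exists_walk_length_three_of_sum_ne_one [CharP F 3] (i : ZMod 3) (x y : ZMod 3 → F)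
    (hxy : ∑ k, (y - x) k ≠ 1) : ∃ p : (parabolaGraph F).Walk (i, x) (i, y), p.length = 3 := by
  have h3 : (3 : F) = 0 := by exact_mod_cast CharP.cast_eq_zero F 3
  obtain ⟨s, hs⟩ := exists_eq_add_sum_sq (F := F) (by simpa using h3) (y - x) <| by
    contrapose! hxy
    linear_combination -hxy + (∑ k, (y - x) k) * h3
  have hy : y = x + parabola i (s i) + parabola (i + 1) (s (i + 1)) +
      parabola (i + 2) (s (i + 2)) := by
    rw [add_assoc, add_assoc, ← add_assoc (parabola i _), parabola_add_parabola_add_parabola, ← hs]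
    abel
  exact ⟨.cons (parabolaGraph_adj (s i) rfl rfl) <|
    .cons (parabolaGraph_adj (j := i + 2) (s (i + 1)) (by ring) rfl) <|
    .cons (parabolaGraph_adj (s (i + 2)) (by ring_nf; reduce_mod_char) hy) .nil, rfl⟩

lemma exists_walk_length_three_succ (h2 : (2 : F) ≠ 0) (i : ZMod 3) (x y : ZMod 3 → F) :
    ∃ p : (parabolaGraph F).Walk (i, x) (i + 1, y), p.length = 3 := by
  rcases exists_parabola_add_sub_or_sub_add h2 i (y - x) with ⟨a, b, c, h⟩ | ⟨a, b, c, h⟩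
  · have hz : x + parabola i a + parabola (i + 1) b = y + parabola (i + 1) c := by
      rw [sub_eq_iff_eq_add] at h
      rw [h]; abel
    exact ⟨.cons (parabolaGraph_adj a rfl rfl) <|
      .cons (parabolaGraph_adj (j := i + 2) b (by ring) rfl) <|
      .cons (parabolaGraph_adj (j := i + 2) c (by ring) hz).symm .nil, rfl⟩
  · have hz : x + parabola i a = x + parabola i a - parabola i b + parabola i b := by abel
    have hy : y = x + parabola i a - parabola i b + parabola i c := by
      rw [sub_eq_iff_eq_add] at h
      rw [h]; abel
    exact ⟨.cons (parabolaGraph_adj a rfl rfl) <|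
      .cons (parabolaGraph_adj b rfl hz).symm <| .cons (parabolaGraph_adj c rfl hy) .nil, rfl⟩

lemma exists_walk_length_three [CharP F 3] (u v : ZMod 3 × (ZMod 3 → F)) :
    ∃ p : (parabolaGraph F).Walk u v, p.length = 3 := by
  have h3 : (3 : F) = 0 := by exact_mod_cast CharP.cast_eq_zero F 3
  have h2 : (2 : F) ≠ 0 := fun h => one_ne_zero (by linear_combination h3 - h)
  have reverse {u v} (h : ∃ p : (parabolaGraph F).Walk u v, p.length = 3) :
      ∃ p : (parabolaGraph F).Walk v u, p.length = 3 :=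
    let ⟨p, hp⟩ := h; ⟨p.reverse, by simpa using hp⟩
  obtain ⟨i, x⟩ := u
  obtain ⟨j, y⟩ := v
  obtain rfl | rfl | rfl := ZMod.eq_or_eq_add_one_or_eq_add_one i j
  · by_cases hxy : ∑ k, (y - x) k = 1
    · refine reverse (exists_walk_length_three_of_sum_ne_one j y x ?_)
      rw [← neg_sub]
      simp only [Pi.neg_apply, Finset.sum_neg_distrib, hxy]
      exact fun h => h2 (by linear_combination -h)
    · exact exists_walk_length_three_of_sum_ne_one j x y hxy
  · exact exists_walk_length_three_succ h2 i x y
  · exact reverse (exists_walk_length_three_succ h2 j y x)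

lemma parabolaGraph_power_three_eq_top [CharP F 3] : (parabolaGraph F).power 3 = ⊤ :=
  power_eq_top fun u v => (exists_walk_length_three u v).imp fun _ h => h.le

lemma toNat_chromaticNumber_parabolaGraph_power_three [CharP F 3] :
    ((parabolaGraph F).power 3).chromaticNumber.toNat = 3 * Nat.card F ^ 3 := by
  rw [parabolaGraph_power_three_eq_top, chromaticNumber_top_eq_enat_card]
  change Nat.card (ZMod 3 × (ZMod 3 → F)) = _
  rw [Nat.card_prod, Nat.card_fun, Nat.card_zmod]

end Parabola

theorem cube_lower_infinitely_many_general (ε : ℝ) (hε0 : 0 < ε) (N : ℕ) :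
    ∃ d : ℕ, N ≤ d ∧
      ∃ (V : Type) (_ : Fintype V) (G : SimpleGraph V),
        (∀ v : V, {w : V | G.Adj v w}.ncard ≤ d) ∧
        (1 - ε) * 3 * (d : ℝ) ^ 3 / 8 ≤ ((G.power 3).chromaticNumber.toNat : ℝ) := by
  let F := GaloisField 3 (N + 1)
  set q := 3 ^ (N + 1)
  have hq : Nat.card F = q := GaloisField.card 3 (N + 1) N.succ_ne_zero
  refine ⟨2 * q, ?_, _, Fintype.ofFinite _, parabolaGraph F,
    fun v => hq ▸ ncard_parabolaGraph_adj_le v, ?_⟩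
  · have := Nat.lt_pow_self (n := N + 1) (show 1 < 3 by norm_num)
    omega
  · rw [toNat_chromaticNumber_parabolaGraph_power_three, hq]
    push_cast
    calc (1 - ε) * 3 * (2 * (q : ℝ)) ^ 3 / 8 = (1 - ε) * (3 * (q : ℝ) ^ 3) := by ring
      _ ≤ 3 * (q : ℝ) ^ 3 := mul_le_of_le_one_left (by positivity) (by linarith)

/-- `χ³₃(d) ≳ 3·d³/8` for infinitely many `d`. -/
theorem cube_lower_infinitely_many (ε : ℝ) (hε0 : 0 < ε) (hε1 : ε < 1) (N : ℕ) :
    ∃ d : ℕ, N ≤ d ∧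
      ∃ (V : Type) (_ : Fintype V) (G : SimpleGraph V),
        (∀ v : V, {w : V | G.Adj v w}.ncard ≤ d) ∧
        (1 - ε) * 3 * (d : ℝ) ^ 3 / 8 ≤ ((G.power 3).chromaticNumber.toNat : ℝ) :=
  cube_lower_infinitely_many_general ε hε0 N
end

section
/- For every real ε with 0 < ε < 1 there exists an integer d₀ such that for every integer d ≥ d₀ there is a finite simple bipartite graph G of maximum degree at most d and girth at least 4 with χ(G⁴) ≥ (1 − ε)·d⁴/8. -/
open SimpleGraph

theorem SimpleGraph.Colorable.four_le_egirth {V : Type*} {G : SimpleGraph V}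
    (hG : G.Colorable 2) : 4 ≤ G.egirth := by
  rw [le_egirth]
  intro a w hw
  obtain ⟨k, hk⟩ := two_colorable_iff_forall_loop_even.mp hG a w
  have := hw.three_le_length
  exact_mod_cast (show 4 ≤ w.length by omega)

section IncidenceSquare

variable {P L : Type*}

def CoversPairs (I : P → L → Prop) : Prop := ∀ x y, ∃ l, I x l ∧ I y l

/-- The Cartesian square of the incidence graph of `I`, with the vertices of `L × L` removed. -/
def incidenceSquare (I : P → L → Prop) : SimpleGraph ((P × P) ⊕ (L × P ⊕ P × L)) where
  Adj
    | .inl (x, y), .inr (.inl (l, y')) | .inr (.inl (l, y')), .inl (x, y) => y = y' ∧ I x l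
    | .inl (x, y), .inr (.inr (x', l)) | .inr (.inr (x', l)), .inl (x, y) => x = x' ∧ I y l
    | _, _ => False
  symm := ⟨by rintro (_ | _ | _) (_ | _ | _) h <;> exact h⟩
  loopless := ⟨by rintro (_ | _ | _) h <;> exact h⟩

variable (I : P → L → Prop)

@[simp] theorem incidenceSquare_adj_inl_inr_inl {x y y' : P} {l : L} :
    (incidenceSquare I).Adj (.inl (x, y)) (.inr (.inl (l, y'))) ↔ y = y' ∧ I x l := Iff.rfl

@[simp] theorem incidenceSquare_adj_inl_inr_inr {x x' y : P} {l : L} :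
    (incidenceSquare I).Adj (.inl (x, y)) (.inr (.inr (x', l))) ↔ x = x' ∧ I y l := Iff.rfl

theorem incidenceSquare_neighborSet_inl (x y : P) :
    (incidenceSquare I).neighborSet (.inl (x, y)) =
      (fun l => .inr (.inl (l, y))) '' {l | I x l} ∪
        (fun l => .inr (.inr (x, l))) '' {l | I y l} := by
  ext (_ | ⟨l, y'⟩ | ⟨x', l⟩) <;> simp [incidenceSquare, and_comm, eq_comm]

theorem incidenceSquare_neighborSet_inr_inl (l : L) (y : P) :
    (incidenceSquare I).neighborSet (.inr (.inl (l, y))) =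
      (fun x => .inl (x, y)) '' {x | I x l} := by
  ext (⟨x, y'⟩ | _ | _) <;> simp [incidenceSquare, and_comm, eq_comm]

theorem incidenceSquare_neighborSet_inr_inr (x : P) (l : L) :
    (incidenceSquare I).neighborSet (.inr (.inr (x, l))) =
      (fun y => .inl (x, y)) '' {y | I y l} := by
  ext (⟨x', y⟩ | _ | _) <;> simp [incidenceSquare, and_comm, eq_comm]

theorem ncard_incidenceSquare_neighborSet_le [Finite P] [Finite L] {r k : ℕ}
    (hr : ∀ x, {l | I x l}.ncard ≤ r) (hk : ∀ l, {x | I x l}.ncard ≤ k)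
    (v : (P × P) ⊕ (L × P ⊕ P × L)) :
    ((incidenceSquare I).neighborSet v).ncard ≤ max (2 * r) k := by
  rcases v with ⟨x, y⟩ | ⟨l, y⟩ | ⟨x, l⟩
  · rw [incidenceSquare_neighborSet_inl]
    calc _ ≤ _ := Set.ncard_union_le _ _
      _ ≤ r + r := add_le_add ((Set.ncard_image_le (Set.toFinite _)).trans (hr x))
        ((Set.ncard_image_le (Set.toFinite _)).trans (hr y))
      _ ≤ _ := by omega
  · rw [incidenceSquare_neighborSet_inr_inl]
    exact (Set.ncard_image_le (Set.toFinite _)).trans ((hk l).trans (le_max_right _ _))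
  · rw [incidenceSquare_neighborSet_inr_inr]
    exact (Set.ncard_image_le (Set.toFinite _)).trans ((hk l).trans (le_max_right _ _))

def incidenceSquareColoring : (incidenceSquare I).Coloring Bool :=
  Coloring.mk Sum.isLeft <| by
    rintro (_ | _ | _) (_ | _ | _) h <;> first | exact h.elim | simp

theorem incidenceSquare_colorable_two : (incidenceSquare I).Colorable 2 :=
  (incidenceSquareColoring I).colorable

variable {I}

theorem CoversPairs.incidenceSquare_power_four_adj (hI : CoversPairs I)
    {u v : P × P} (huv : u ≠ v) : ((incidenceSquare I).power 4).Adj (.inl u) (.inl v) := by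
  obtain ⟨x, y⟩ := u
  obtain ⟨x', y'⟩ := v
  obtain ⟨l, hx, hx'⟩ := hI x x'
  obtain ⟨m, hy, hy'⟩ := hI y y'
  have e₁ : (incidenceSquare I).Adj (.inl (x, y)) (.inr (.inl (l, y))) := by simp [hx]
  have e₂ : (incidenceSquare I).Adj (.inl (x', y)) (.inr (.inl (l, y))) := by simp [hx']
  have e₃ : (incidenceSquare I).Adj (.inl (x', y)) (.inr (.inr (x', m))) := by simp [hy]
  have e₄ : (incidenceSquare I).Adj (.inl (x', y')) (.inr (.inr (x', m))) := by simp [hy']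
  exact ⟨Sum.inl_injective.ne huv,
    .cons e₁ <| .cons e₂.symm <| .cons e₃ <| .cons e₄.symm .nil, le_rfl⟩

theorem CoversPairs.card_sq_le_chromaticNumber_power_four [Finite P] [Finite L]
    (hI : CoversPairs I) :
    Nat.card P ^ 2 ≤ ((incidenceSquare I).power 4).chromaticNumber.toNat := by
  rw [sq, ← Nat.card_prod]
  exact (colorable_chromaticNumber_of_fintype _).card_le_of_pairwise_adj Sum.inl
    fun _ _ => hI.incidenceSquare_power_four_adj

end IncidenceSquare

section Incidences

variable {P₁ L₁ P₂ L₂ : Type*}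

def prodIncidence (I₁ : P₁ → L₁ → Prop) (I₂ : P₂ → L₂ → Prop) (x : P₁ × P₂) (l : L₁ × L₂) :
    Prop :=
  I₁ x.1 l.1 ∧ I₂ x.2 l.2

variable {I₁ : P₁ → L₁ → Prop} {I₂ : P₂ → L₂ → Prop}

theorem CoversPairs.prod (h₁ : CoversPairs I₁) (h₂ : CoversPairs I₂) :
    CoversPairs (prodIncidence I₁ I₂) := fun x y => by
  obtain ⟨l₁, hx₁, hy₁⟩ := h₁ x.1 y.1
  obtain ⟨l₂, hx₂, hy₂⟩ := h₂ x.2 y.2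
  exact ⟨(l₁, l₂), ⟨hx₁, hx₂⟩, ⟨hy₁, hy₂⟩⟩

theorem ncard_setOf_prodIncidence_lines (x : P₁ × P₂) :
    {l | prodIncidence I₁ I₂ x l}.ncard = {l | I₁ x.1 l}.ncard * {l | I₂ x.2 l}.ncard :=
  Set.ncard_prod

theorem ncard_setOf_prodIncidence_points (l : L₁ × L₂) :
    {x | prodIncidence I₁ I₂ x l}.ncard = {x | I₁ x l.1}.ncard * {x | I₂ x l.2}.ncard :=
  Set.ncard_prod (s := {x | I₁ x l.1}) (t := {x | I₂ x l.2})

end Incidences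

section AffinePlane

variable {K : Type*} [Field K]

/-- The line `(some m, c)` is `y = m * x + c` and `(none, c)` is `x = c`. -/
def OnAffineLine : K × K → Option K × K → Prop
  | (x, y), (some m, c) => y = m * x + c
  | (x, _), (none, c) => x = c

theorem coversPairs_onAffineLine : CoversPairs (OnAffineLine (K := K)) := by
  rintro ⟨x, y⟩ ⟨x', y'⟩
  by_cases hx : x = x'
  · exact ⟨(none, x), rfl, hx.symm⟩
  · have : x - x' ≠ 0 := sub_ne_zero.mpr hx
    refine ⟨(some ((y - y') / (x - x')), y - (y - y') / (x - x') * x), ?_, ?_⟩ <;>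
      simp only [OnAffineLine] <;> field_simp <;> ring

variable [Fintype K]

theorem ncard_setOf_onAffineLine_lines_le (p : K × K) :
    {l | OnAffineLine p l}.ncard ≤ Fintype.card K + 1 := by
  have hinj : Set.InjOn Prod.fst {l | OnAffineLine p l} := by
    rintro ⟨m, c⟩ hl ⟨m', c'⟩ hl' (rfl : m = m')
    cases m with
    | none => exact congrArg _ (hl.symm.trans hl')
    | some m => exact congrArg _ (add_left_cancel (hl.symm.trans hl'))
  simpa using Set.ncard_le_ncard_of_injOn _ (fun _ _ => Set.mem_univ _) hinj

theorem ncard_setOf_onAffineLine_points_le (l : Option K × K) :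
    {p | OnAffineLine p l}.ncard ≤ Fintype.card K := by
  obtain ⟨_ | m, c⟩ := l
  · have hinj : Set.InjOn Prod.snd {p : K × K | OnAffineLine p (none, c)} :=
      fun p hp q hq h => Prod.ext (hp.trans hq.symm) h
    simpa using Set.ncard_le_ncard_of_injOn _ (fun _ _ => Set.mem_univ _) hinj
  · have hinj : Set.InjOn Prod.fst {p : K × K | OnAffineLine p (some m, c)} := by
      rintro ⟨x, y⟩ (hp : y = _) ⟨x', y'⟩ (hq : y' = _) (rfl : x = x')
      rw [hp, hq]
    simpa using Set.ncard_le_ncard_of_injOn _ (fun _ _ => Set.mem_univ _) hinj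

end AffinePlane

/-- For `a = 10` one of the primes `131, 149, 173, 199, 229` (consecutive ratios below `1.18`) fits
every `d < 541200`; larger `d` are reached by doubling `2 ^ a`. -/
theorem exists_prime_mul_two_pow_near (d : ℕ) (hd : 270600 ≤ d) :
    ∃ p a, p.Prime ∧ a ≠ 0 ∧ 2 * ((p + 1) * (2 ^ a + 1)) ≤ d ∧
      100 * (d + 1) ≤ 237 * (p * 2 ^ a) := by
  induction d using Nat.strong_induction_on with
  | _ d ih =>
  by_cases hsmall : d < 541200
  · obtain ⟨p, hp, hlow, hhigh⟩ : ∃ p, p.Prime ∧ 2 * ((p + 1) * (2 ^ 10 + 1)) ≤ d ∧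
        100 * (d + 1) ≤ 237 * (p * 2 ^ 10) := by
      by_cases h : d < 307500
      · exact ⟨131, by norm_num, by omega, by omega⟩
      by_cases h : d < 356700
      · exact ⟨149, by norm_num, by omega, by omega⟩
      by_cases h : d < 410000
      · exact ⟨173, by norm_num, by omega, by omega⟩
      by_cases h : d < 471500
      · exact ⟨199, by norm_num, by omega, by omega⟩
      · exact ⟨229, by norm_num, by omega, by omega⟩
    exact ⟨p, 10, hp, by norm_num, hlow, hhigh⟩
  · obtain ⟨e, hde⟩ : ∃ e, d = 2 * e ∨ d = 2 * e + 1 := ⟨d / 2, by omega⟩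
    obtain ⟨p, a, hp, ha, hlow, hhigh⟩ := ih e (by omega) (by omega)
    refine ⟨p, a + 1, hp, a.succ_ne_zero, ?_, ?_⟩ <;> rw [pow_succ] <;> rcases hde with rfl | rfl
    all_goals linarith

theorem exists_bipartite_le_chromaticNumber_power_four (K₁ K₂ : Type) [Field K₁] [Fintype K₁]
    [Field K₂] [Fintype K₂] :
    ∃ (V : Type) (_ : Fintype V) (G : SimpleGraph V),
      (∀ v, {w | G.Adj v w}.ncard ≤ 2 * ((Fintype.card K₁ + 1) * (Fintype.card K₂ + 1))) ∧
      G.Colorable 2 ∧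
      4 * (Fintype.card K₁ * Fintype.card K₂) ^ 4 ≤ (G.power 4).chromaticNumber.toNat := by
  let I := prodIncidence (prodIncidence (OnAffineLine (K := K₁)) (OnAffineLine (K := K₂)))
    fun (_ : Fin 2) (_ : Unit) => True
  have hI : CoversPairs I :=
    (coversPairs_onAffineLine.prod coversPairs_onAffineLine).prod
      fun _ _ => ⟨(), trivial, trivial⟩
  have hlines (x) : {l | I x l}.ncard ≤ (Fintype.card K₁ + 1) * (Fintype.card K₂ + 1) := by
    simpa [I, ncard_setOf_prodIncidence_lines] using
      Nat.mul_le_mul (ncard_setOf_onAffineLine_lines_le x.1.1)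
        (ncard_setOf_onAffineLine_lines_le x.1.2)
  have hpoints (l) : {x | I x l}.ncard ≤ Fintype.card K₁ * Fintype.card K₂ * 2 := by
    simpa [I, ncard_setOf_prodIncidence_points] using
      Nat.mul_le_mul (ncard_setOf_onAffineLine_points_le l.1.1)
        (ncard_setOf_onAffineLine_points_le l.1.2)
  refine ⟨_, inferInstance, incidenceSquare I, fun v => ?_, incidenceSquare_colorable_two I, ?_⟩
  · refine (ncard_incidenceSquare_neighborSet_le I hlines hpoints v).trans (max_le le_rfl ?_)
    nlinarith
  · convert hI.card_sq_le_chromaticNumber_power_four using 1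
    simp only [Nat.card_eq_fintype_card, Fintype.card_prod, Fintype.card_fin]
    ring

theorem fourth_power_girth_four_lower_general (ε : ℝ) (hε0 : 0 < ε) :
    ∃ d₀ : ℕ, ∀ d : ℕ, d₀ ≤ d →
      ∃ (V : Type) (_ : Fintype V) (G : SimpleGraph V),
        (∀ v : V, {w : V | G.Adj v w}.ncard ≤ d) ∧
        G.Colorable 2 ∧
        4 ≤ G.egirth ∧
        (1 - ε) * (d : ℝ) ^ 4 / 8 ≤ ((G.power 4).chromaticNumber.toNat : ℝ) := by
  refine ⟨270600, fun d hd => ?_⟩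
  obtain ⟨p, a, hp, ha, hdeg, hsize⟩ := exists_prime_mul_two_pow_near d hd
  have : Fact p.Prime := ⟨hp⟩
  let _ : Fintype (GaloisField 2 a) := Fintype.ofFinite _
  obtain ⟨V, hV, G, hG, hcol, hχ⟩ :=
    exists_bipartite_le_chromaticNumber_power_four (ZMod p) (GaloisField 2 a)
  rw [ZMod.card, ← Nat.card_eq_fintype_card, GaloisField.card 2 a ha] at hG hχ
  refine ⟨V, hV, G, fun v => (hG v).trans hdeg, hcol, hcol.four_le_egirth, ?_⟩
  have hpow : d ^ 4 ≤ 8 * (4 * (p * 2 ^ a) ^ 4) := by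
    have := Nat.pow_le_pow_left (show 100 * d ≤ 237 * (p * 2 ^ a) by omega) 4
    rw [mul_pow, mul_pow] at this
    omega
  have hpow' : (d : ℝ) ^ 4 ≤ 8 * (G.power 4).chromaticNumber.toNat := by
    exact_mod_cast hpow.trans (Nat.mul_le_mul_left 8 hχ)
  calc (1 - ε) * (d : ℝ) ^ 4 / 8 ≤ (d : ℝ) ^ 4 / 8 := by
        gcongr; exact mul_le_of_le_one_left (by positivity) (by linarith)
    _ ≤ _ := by linarith

/-- `χ⁴₄(d) ≳ 2·d⁴/16 = d⁴/8` as `d → ∞`, with bipartite witnesses. -/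
theorem fourth_power_girth_four_lower (ε : ℝ) (hε0 : 0 < ε) (hε1 : ε < 1) :
    ∃ d₀ : ℕ, ∀ d : ℕ, d₀ ≤ d →
      ∃ (V : Type) (_ : Fintype V) (G : SimpleGraph V),
        (∀ v : V, {w : V | G.Adj v w}.ncard ≤ d) ∧
        G.Colorable 2 ∧
        4 ≤ G.egirth ∧
        (1 - ε) * (d : ℝ) ^ 4 / 8 ≤ ((G.power 4).chromaticNumber.toNat : ℝ) :=
  fourth_power_girth_four_lower_general ε hε0
end
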